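/- For every n ≥ 1, snc(n) is even if and only if n mod 7 is one of 3, 5, or 6. -/
import Mathlib


def snc : ℕ → ℕ
  | 0 => 1
  | 1 => 1
  | n + 2 => if (n + 2) % 2 = 0 then snc ((n + 2) / 2) else snc (n + 1) + snc (n - 1)
decreasing_by all_goals omega

lemma snc_two_mul (k : ℕ) : snc (2 * k) = snc k := by
  match k with
  | 0 => rfl
  | j + 1 =>
    have h : 2 * (j + 1) = 2 * j + 2 := by ring
    rw [h, snc, if_pos (by omega : (2 * j + 2) % 2 = 0)]
    congr 1
    omega

lemma snc_odd (k : ℕ) (hk : 1 ≤ k) : snc (2 * k + 1) = snc k + snc (k - 1) := by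
  obtain ⟨j, rfl⟩ := Nat.exists_eq_add_of_le hk
  have h : 2 * (1 + j) + 1 = (2 * j + 1) + 2 := by ring
  rw [h, snc, if_neg (by omega : ¬ ((2 * j + 1 + 2) % 2 = 0))]
  have e1 : 2 * j + 1 + 1 = 2 * (1 + j) := by ring
  have e2 : 2 * j + 1 - 1 = 2 * j := by omega
  rw [e1, e2, snc_two_mul, snc_two_mul]
  simp

lemma snc_mod_two (n : ℕ) :
    snc n % 2 = if n % 7 = 3 ∨ n % 7 = 5 ∨ n % 7 = 6 then 0 else 1 := by
  induction n using Nat.strong_induction_on with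
  | _ n IH =>
    match n with
    | 0 => simp [snc]
    | 1 => simp [snc]
    | m + 2 =>
      rcases Nat.even_or_odd (m + 2) with h | h
      · obtain ⟨k, hk⟩ := h
        have hk' : m + 2 = 2 * k := by omega
        rw [hk', snc_two_mul, IH k (by omega)]
        split <;> split <;> omega
      · obtain ⟨k, hk⟩ := h
        have hk1 : 1 ≤ k := by omega
        obtain ⟨j, rfl⟩ : ∃ j, k = j + 1 := ⟨k - 1, by omega⟩
        rw [hk, snc_odd (j + 1) hk1, Nat.add_mod, IH (j + 1) (by omega),
          IH (j + 1 - 1) (by omega)]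
        simp only [Nat.add_sub_cancel]
        have h7 : j % 7 = 0 ∨ j % 7 = 1 ∨ j % 7 = 2 ∨ j % 7 = 3 ∨ j % 7 = 4 ∨
            j % 7 = 5 ∨ j % 7 = 6 := by omega
        rcases h7 with h7|h7|h7|h7|h7|h7|h7 <;> (split <;> split <;> split <;> omega)

theorem snc_even_iff (n : ℕ) (hn : 1 ≤ n) :
    Even (snc n) ↔ n % 7 = 3 ∨ n % 7 = 5 ∨ n % 7 = 6 := by
  rw [Nat.even_iff, snc_mod_two n]
  split <;> omega
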